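/- The complex (𝔄_*, δ) decomposes as a direct sum of chain complexes indexed by pairs (i, L), where i ≥ 0 and L ranges over finite collections of i-element subsets of ℤ_{>0} with empty total intersection, each summand being isomorphic to the augmented chain complex of the infinite simplex; consequently the homology of (𝔄_*, δ) is identically zero. -/

import Mathlib

/-!
A generator `(S, L)` of `𝔄` has `S ⊆ ℕ ∖ ⋃ L`, and the increasing enumeration of `ℕ ∖ ⋃ L`
identifies `ℕ` with that set order-preservingly. Since the signs in `δ` only depend on the ranks of
the removed vertices inside `S`, transporting `S` back along this enumeration identifies the span
of the generators with hat part `L` with `C_*(Δ₊)` as a complex. The latter is contractible: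
coning from the vertex `0` is a contracting homotopy, so every cycle is a boundary.
-/

/-- The (1-based) rank of `a` in the increasingly ordered finite set `T`. -/
def rankIn (T : Finset ℕ) (a : ℕ) : ℕ := (T.filter (· ≤ a)).card

/-- `L` is a valid "hat part": a collection of `i`-element subsets of `ℤ_{>0}` with
empty total intersection. -/
def ValidL (i : ℕ) (L : Finset (Finset ℕ)) : Prop :=
  (∀ s ∈ L, s.card = i) ∧ (∀ n : ℕ, ∃ s ∈ L, n ∉ s)

/-- Generators of 𝔄_*: pairs `(∩Λ, Λ̂)` with `∩Λ` disjoint from `⋃Λ̂` and `Λ̂` valid. -/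
def GenP : Type :=
  {p : Finset ℕ × Finset (Finset ℕ) // Disjoint p.1 (p.2.sup id) ∧ ∃ i, ValidL i p.2}

/-- 𝔄_* as a ℚ-vector space. -/
abbrev 𝔄 : Type := GenP →₀ ℚ

/-- The chain complex `C_*(Δ₊)` of the infinite simplex, as a ℚ-vector space. -/
abbrev C : Type := (Finset ℕ) →₀ ℚ

/-- The differential δ, acting on the `∩Λ` coordinate as the augmented simplicial
boundary. -/
noncomputable def deltaA : 𝔄 →ₗ[ℚ] 𝔄 :=
  Finsupp.lift 𝔄 ℚ GenP fun p =>
    ∑ a ∈ p.1.1,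
      ((-1 : ℚ) ^ rankIn p.1.1 a) •
        Finsupp.single
          ⟨(p.1.1.erase a, p.1.2),
            Finset.disjoint_of_subset_left (Finset.erase_subset _ _) p.2.1, p.2.2⟩ 1

/-- The index set of the direct sum: pairs `(i, L)` with `L` a finite collection of
`i`-element subsets of `ℤ_{>0}` with empty total intersection. -/
def J : Type := {q : ℕ × Finset (Finset ℕ) // ValidL q.1 q.2}

/-- The augmented simplicial boundary of `Δ₊`. -/
noncomputable def bdry : C →ₗ[ℚ] C :=
  Finsupp.lift C ℚ (Finset ℕ) fun I =>
    ∑ i ∈ I, ((-1 : ℚ) ^ rankIn I i) • Finsupp.single (I.erase i) 1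

/-- The componentwise differential on the direct sum `⨁_{(i,L)} C_*(Δ₊)`. -/
noncomputable def D : DirectSum J (fun _ => C) →ₗ[ℚ] DirectSum J (fun _ => C) :=
  DFinsupp.mapRange.linearMap fun _ => bdry

open Finset

lemma LinearMap.apply_apply_eq_self_of_homotopy {R M : Type*} [Semiring R] [AddCommMonoid M]
    [Module R M] {d h : M →ₗ[R] M} (hdh : d ∘ₗ h + h ∘ₗ d = LinearMap.id) {x : M}
    (hx : d x = 0) : d (h x) = x := by
  simpa [hx] using LinearMap.congr_fun hdh x

lemma bdry_single (T : Finset ℕ) :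
    bdry (Finsupp.single T 1) =
      ∑ t ∈ T, ((-1 : ℚ) ^ rankIn T t) • Finsupp.single (T.erase t) 1 := by
  simp [bdry]

lemma deltaA_single (p : GenP) :
    deltaA (Finsupp.single p 1) =
      ∑ a ∈ p.1.1, ((-1 : ℚ) ^ rankIn p.1.1 a) •
        Finsupp.single (⟨(p.1.1.erase a, p.1.2),
          disjoint_of_subset_left (erase_subset _ _) p.2.1, p.2.2⟩ : GenP) 1 := by
  rw [deltaA, Finsupp.lift_apply, Finsupp.sum_single_index (by simp), one_smul]
  rfl

lemma rankIn_image_of_strictMono {f : ℕ → ℕ} (hf : StrictMono f) (S : Finset ℕ) (a : ℕ) :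
    rankIn (S.image f) (f a) = rankIn S a := by
  simp [rankIn, filter_image, hf.le_iff_le, card_image_of_injective _ hf.injective]

lemma rankIn_zero_of_mem {I : Finset ℕ} (h0 : 0 ∈ I) : rankIn I 0 = 1 := by
  simp [rankIn, filter_eq', h0]

lemma rankIn_insert_zero {I : Finset ℕ} (h0 : 0 ∉ I) (a : ℕ) :
    rankIn (insert 0 I) a = rankIn I a + 1 := by
  rw [rankIn, filter_insert, if_pos (Nat.zero_le a),
    card_insert_of_notMem fun h => h0 (mem_of_mem_filter _ h), rankIn]

/-- The cone with apex `0`, signed so that it contracts `bdry`. -/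
noncomputable def coneZero : C →ₗ[ℚ] C :=
  Finsupp.lift C ℚ (Finset ℕ) fun I => if 0 ∈ I then 0 else -Finsupp.single (insert 0 I) 1

lemma coneZero_single (I : Finset ℕ) :
    coneZero (Finsupp.single I 1) = if 0 ∈ I then 0 else -Finsupp.single (insert 0 I) 1 := by
  rw [coneZero, Finsupp.lift_apply, Finsupp.sum_single_index (by simp), one_smul]

lemma bdry_coneZero_add_coneZero_bdry_single (I : Finset ℕ) :
    bdry (coneZero (Finsupp.single I 1)) + coneZero (bdry (Finsupp.single I 1)) =
      Finsupp.single I 1 := by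
  by_cases h0 : 0 ∈ I
  · have hcone : ∀ a ≠ 0, coneZero (Finsupp.single (I.erase a) 1) = 0 := fun a ha => by
      rw [coneZero_single, if_pos (mem_erase.mpr ⟨ha.symm, h0⟩)]
    rw [coneZero_single, if_pos h0, map_zero, zero_add, bdry_single, map_sum,
      sum_eq_single_of_mem 0 h0 fun a _ ha0 => by rw [map_smul, hcone a ha0, smul_zero],
      map_smul, coneZero_single, if_neg (notMem_erase 0 I), rankIn_zero_of_mem h0,
      insert_erase h0]
    simp
  · set σ := ∑ a ∈ I, ((-1 : ℚ) ^ rankIn I a) • Finsupp.single (insert 0 (I.erase a)) (1 : ℚ)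
    have hbdry : ∑ a ∈ I, ((-1 : ℚ) ^ rankIn (insert 0 I) a) •
        Finsupp.single ((insert 0 I).erase a) (1 : ℚ) = -σ := by
      rw [← sum_neg_distrib]
      refine sum_congr rfl fun a ha => ?_
      rw [rankIn_insert_zero h0, erase_insert_of_ne (ne_of_mem_of_not_mem ha h0).symm, pow_succ,
        mul_neg_one, neg_smul]
    have hcone : ∑ a ∈ I,
        coneZero (((-1 : ℚ) ^ rankIn I a) • Finsupp.single (I.erase a) (1 : ℚ)) = -σ := by
      rw [← sum_neg_distrib]
      refine sum_congr rfl fun a _ => ?_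
      rw [map_smul, coneZero_single, if_neg fun h => h0 (mem_of_mem_erase h), smul_neg]
    rw [coneZero_single, if_neg h0, map_neg, bdry_single, sum_insert h0,
      rankIn_zero_of_mem (mem_insert_self 0 I), erase_insert h0, hbdry, bdry_single, map_sum,
      hcone]
    simp

lemma bdry_comp_coneZero_add_coneZero_comp_bdry :
    bdry ∘ₗ coneZero + coneZero ∘ₗ bdry = LinearMap.id :=
  Finsupp.lhom_ext' fun I => LinearMap.ext_ring (bdry_coneZero_add_coneZero_bdry_single I)

noncomputable def enumCompl (U : Finset ℕ) : ℕ → ℕ := Nat.nth (· ∉ U)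

lemma infinite_setOf_notMem (U : Finset ℕ) : (Set.ofPred (· ∉ U)).Infinite :=
  U.finite_toSet.infinite_compl

lemma enumCompl_strictMono (U : Finset ℕ) : StrictMono (enumCompl U) :=
  Nat.nth_strictMono (infinite_setOf_notMem U)

lemma enumCompl_notMem (U : Finset ℕ) (n : ℕ) : enumCompl U n ∉ U :=
  Nat.nth_mem_of_infinite (infinite_setOf_notMem U) n

lemma exists_image_enumCompl_eq {U S : Finset ℕ} (h : Disjoint S U) :
    ∃ T : Finset ℕ, T.image (enumCompl U) = S :=
  ⟨S.image (Nat.count (· ∉ U)), by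
    rw [image_image]
    exact (image_congr fun a ha => Nat.nth_count (disjoint_left.mp h ha)).trans S.image_id'⟩

lemma ValidL.unique {i i' : ℕ} {L : Finset (Finset ℕ)} (h : ValidL i L) (h' : ValidL i' L) :
    i = i' := by
  obtain ⟨s, hs, -⟩ := h.2 0
  rw [← h.1 s hs, h'.1 s hs]

noncomputable def toGenP (x : Σ _ : J, Finset ℕ) : GenP :=
  ⟨(x.2.image (enumCompl (x.1.1.2.sup id)), x.1.1.2),
    disjoint_left.mpr fun _ ha => by
      obtain ⟨n, -, rfl⟩ := mem_image.mp ha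
      exact enumCompl_notMem _ n,
    x.1.1.1, x.1.2⟩

lemma toGenP_bijective : Function.Bijective toGenP := by
  constructor
  · rintro ⟨⟨⟨i, L⟩, hL⟩, T⟩ ⟨⟨⟨i', L'⟩, hL'⟩, T'⟩ h
    obtain ⟨hT, rfl⟩ := Prod.ext_iff.mp (congrArg Subtype.val h)
    obtain rfl := hL.unique hL'
    obtain rfl := image_injective (enumCompl_strictMono _).injective hT
    rfl
  · rintro ⟨⟨S, L⟩, hSL, i, hL⟩
    obtain ⟨T, hT⟩ := exists_image_enumCompl_eq (U := L.sup id) hSL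
    exact ⟨⟨⟨(i, L), hL⟩, T⟩, Subtype.ext (Prod.ext hT rfl)⟩

instance : DecidableEq J :=
  inferInstanceAs (DecidableEq {q : ℕ × Finset (Finset ℕ) // ValidL q.1 q.2})

noncomputable def simplexSumEquiv : DirectSum J (fun _ => C) ≃ₗ[ℚ] 𝔄 :=
  (sigmaFinsuppLequivDFinsupp ℚ).symm ≪≫ₗ
    Finsupp.domLCongr (Equiv.ofBijective toGenP toGenP_bijective)

lemma simplexSumEquiv_single (j : J) (T : Finset ℕ) (c : ℚ) :
    simplexSumEquiv (DFinsupp.single j (Finsupp.single T c)) =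
      Finsupp.single (toGenP ⟨j, T⟩) c := by
  have hsigma : (sigmaFinsuppLequivDFinsupp ℚ).symm (DFinsupp.single j (Finsupp.single T c)) =
      Finsupp.single (⟨j, T⟩ : Σ _ : J, Finset ℕ) c := by
    rw [LinearEquiv.symm_apply_eq]
    exact (sigmaFinsuppEquivDFinsupp_single (⟨j, T⟩ : Σ _ : J, Finset ℕ) c).symm
  simp [simplexSumEquiv, hsigma]

lemma D_single (j : J) (v : C) :
    D (DFinsupp.single j v) = DFinsupp.single (β := fun _ => C) j (bdry v) :=
  DFinsupp.mapRange_single (hf := fun _ => map_zero bdry)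

lemma deltaA_single_toGenP (j : J) (T : Finset ℕ) :
    deltaA (Finsupp.single (toGenP ⟨j, T⟩) 1) =
      ∑ t ∈ T, ((-1 : ℚ) ^ rankIn T t) • Finsupp.single (toGenP ⟨j, T.erase t⟩) 1 := by
  have hf := enumCompl_strictMono (j.1.2.sup id)
  rw [deltaA_single]
  dsimp only [toGenP]
  refine (sum_image fun _ _ _ _ h => hf.injective h).trans (sum_congr rfl fun t _ => ?_)
  rw [rankIn_image_of_strictMono hf]
  simp only [image_erase hf.injective]
  rfl

lemma deltaA_comp_simplexSumEquiv :
    deltaA ∘ₗ simplexSumEquiv.toLinearMap = simplexSumEquiv.toLinearMap ∘ₗ D := by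
  refine DFinsupp.lhom_ext' fun j => Finsupp.lhom_ext' fun T => LinearMap.ext_ring ?_
  simp only [LinearMap.comp_apply, LinearEquiv.coe_coe, DFinsupp.lsingle_apply,
    Finsupp.lsingle_apply]
  rw [simplexSumEquiv_single, deltaA_single_toGenP, D_single, bdry_single,
    ← DFinsupp.lsingle_apply (R := ℚ), map_sum, map_sum]
  refine sum_congr rfl fun t _ => ?_
  rw [map_smul, map_smul, DFinsupp.lsingle_apply, simplexSumEquiv_single]

noncomputable def coneZeroSum : DirectSum J (fun _ => C) →ₗ[ℚ] DirectSum J (fun _ => C) :=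
  DFinsupp.mapRange.linearMap fun _ => coneZero

lemma D_comp_coneZeroSum_add_coneZeroSum_comp_D :
    D ∘ₗ coneZeroSum + coneZeroSum ∘ₗ D = LinearMap.id :=
  LinearMap.ext fun x => DFinsupp.ext fun j =>
    LinearMap.congr_fun bdry_comp_coneZero_add_coneZero_comp_bdry (x j)

/-- `(𝔄_*, δ)` decomposes as a direct sum of copies of the (acyclic) augmented chain
complex of the infinite simplex, indexed by the pairs `(i, L)`; consequently its
homology is identically zero. -/
theorem stmt18 :
    (∃ φ : 𝔄 ≃ₗ[ℚ] DirectSum J (fun _ => C), ∀ x : 𝔄, φ (deltaA x) = D (φ x)) ∧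
    (∀ x : 𝔄, deltaA x = 0 → ∃ y : 𝔄, deltaA y = x) := by
  set ψ := simplexSumEquiv
  have hδ (y : DirectSum J (fun _ => C)) : deltaA (ψ y) = ψ (D y) :=
    LinearMap.congr_fun deltaA_comp_simplexSumEquiv y
  refine ⟨⟨ψ.symm, fun x => ?_⟩, fun x hx => ⟨ψ (coneZeroSum (ψ.symm x)), ?_⟩⟩
  · rw [ψ.symm_apply_eq, ← hδ, ψ.apply_symm_apply]
  · have hcycle : D (ψ.symm x) = 0 :=
      ψ.injective (by rw [← hδ, ψ.apply_symm_apply, hx, map_zero])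
    rw [hδ, LinearMap.apply_apply_eq_self_of_homotopy D_comp_coneZeroSum_add_coneZeroSum_comp_D
      hcycle, ψ.apply_symm_apply]
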